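/- For ν ∈ ℂ with Im ν > 0, let K_ν(x) = e^{iν|x|}/(4π|x|) for x ∈ ℝ³ \ {0}. Then: (a) there is an absolute constant C with ‖K_ν‖_{L²({|x|<1})} ≤ C; and (b) for every p ∈ [1,∞] with p ≠ 3 there is a constant C_p, independent of ν, such that ‖K_ν‖_{L^p({|x|≥1})} ≤ C_p (1 + (Im ν)^{1−3/p}). -/

import Mathlib

/-!
Since `|K_ν(x)| = e^{-(Im ν)|x|} / (4π|x|) ≤ |x|⁻¹`, part (a) and the exponents `p > 3` (including
`p = ∞`) follow, uniformly in `ν`, from `|x|⁻¹` lying in `L²` near the origin and in `L^p` away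
from it. For `p < 3` we use scaling instead: with `t = Im ν`, `|K_ν(x)| = t |K_i(t x)|`, so
`‖K_ν‖_{L^p(ℝ³)} = t^{1-3/p} ‖K_i‖_{L^p(ℝ³)}`, and `K_i ∈ L^p(ℝ³)` because in polar coordinates
its `p`-th power integrates to a multiple of `∫₀^∞ r^{2-p} e^{-pr} dr < ∞`.
-/

open MeasureTheory

/-- The Helmholtz resolvent kernel `K_ν(x) = e^{iν|x|}/(4π|x|)` on `ℝ³`. -/
noncomputable def Kres (ν : ℂ) (x : EuclideanSpace ℝ (Fin 3)) : ℂ :=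
  Complex.exp (Complex.I * ν * (‖x‖ : ℂ)) / (4 * (Real.pi : ℂ) * (‖x‖ : ℂ))

open Metric Set Real Module
open scoped ENNReal

lemma MeasureTheory.MemLp.exists_pos_eLpNorm_le {α F : Type*} [MeasurableSpace α]
    [NormedAddCommGroup F] {f : α → F} {p : ℝ≥0∞} {μ : Measure α} (hf : MemLp f p μ) :
    ∃ C : ℝ, 0 < C ∧ eLpNorm f p μ ≤ ENNReal.ofReal C :=
  ⟨(eLpNorm f p μ).toReal + 1, by positivity, by
    rw [← ENNReal.ofReal_toReal hf.eLpNorm_ne_top]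
    exact ENNReal.ofReal_le_ofReal (by simp)⟩

section Haar

variable {E F : Type*} [NormedAddCommGroup E] [NormedSpace ℝ E] [FiniteDimensional ℝ E]
  [MeasurableSpace E] [BorelSpace E] {μ : Measure E} [μ.IsAddHaarMeasure]
  [NormedAddCommGroup F] {p : ℝ≥0∞}

lemma eLpNorm_comp_smul {f : E → F} (hf : AEStronglyMeasurable f μ) {t : ℝ} (ht : 0 < t)
    (hp : p ≠ ∞) :
    eLpNorm (fun x ↦ f (t • x)) p μ =
      ENNReal.ofReal (t ^ (-(finrank ℝ E / p.toReal))) * eLpNorm f p μ := by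
  have hmap := Measure.map_addHaar_smul μ ht.ne'
  rw [← Function.comp_def, ← eLpNorm_map_measure (by rw [hmap]; exact hf.smul_measure _)
    (measurable_const_smul t).aemeasurable, hmap, eLpNorm_smul_measure_of_ne_top hp, smul_eq_mul,
    ENNReal.ofReal_rpow_of_nonneg (by positivity) (by positivity), abs_of_pos (by positivity),
    ← Real.rpow_natCast, ← Real.rpow_neg ht.le, ← Real.rpow_mul ht.le, one_div,
    ENNReal.toReal_inv, div_eq_mul_inv, neg_mul]

lemma memLp_norm_inv_ball (hp : p < finrank ℝ E) (r : ℝ) :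
    MemLp (fun x : E ↦ ‖x‖⁻¹) p (μ.restrict (ball 0 r)) := by
  have hmeas : AEStronglyMeasurable (fun x : E ↦ ‖x‖⁻¹) (μ.restrict (ball 0 r)) := by
    fun_prop
  rcases eq_or_ne p 0 with rfl | hp0
  · exact memLp_zero_iff_aestronglyMeasurable.2 hmeas
  have hptop : p ≠ ∞ := (hp.trans (ENNReal.natCast_lt_top _)).ne
  have hq : p.toReal < finrank ℝ E := by
    simpa using (ENNReal.toReal_lt_toReal hptop (ENNReal.natCast_ne_top _)).2 hp
  have hd : 1 ≤ finrank ℝ E := Nat.one_le_iff_ne_zero.2 fun h ↦ by simp [h] at hp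
  rw [← integrable_norm_rpow_iff hmeas hp0 hptop]
  refine integrableOn_ball_of_norm_le_rpow hd (C := 1) hq (ae_of_all _ fun x ↦ ?_)
    ((Measurable.pow_const (by fun_prop) _).aestronglyMeasurable)
  rw [one_mul, norm_inv, norm_norm, Real.norm_of_nonneg (by positivity),
    Real.inv_rpow (norm_nonneg _), Real.rpow_neg (norm_nonneg _)]

lemma memLp_inv_one_add_norm (hp : (finrank ℝ E : ℝ≥0∞) < p) :
    MemLp (fun x : E ↦ (1 + ‖x‖)⁻¹) p μ := by
  have hmeas : AEStronglyMeasurable (fun x : E ↦ (1 + ‖x‖)⁻¹) μ := by fun_prop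
  rcases eq_or_ne p ∞ with rfl | hptop
  · refine memLp_top_of_bound hmeas 1 (ae_of_all _ fun x ↦ ?_)
    rw [norm_inv, Real.norm_of_nonneg (by positivity)]
    exact inv_le_one_of_one_le₀ (by simp)
  have hp0 : p ≠ 0 := (zero_le.trans_lt hp).ne'
  have hq : (finrank ℝ E : ℝ) < p.toReal := by
    simpa using (ENNReal.toReal_lt_toReal (ENNReal.natCast_ne_top _) hptop).2 hp
  rw [← integrable_norm_rpow_iff hmeas hp0 hptop]
  refine (integrable_one_add_norm hq).congr (ae_of_all _ fun x ↦ ?_)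
  dsimp only
  rw [norm_inv, Real.norm_of_nonneg (by positivity), Real.inv_rpow (by positivity),
    Real.rpow_neg (by positivity)]

lemma memLp_norm_inv_of_one_le_norm (hp : (finrank ℝ E : ℝ≥0∞) < p) :
    MemLp (fun x : E ↦ ‖x‖⁻¹) p (μ.restrict {x | 1 ≤ ‖x‖}) := by
  have hset : MeasurableSet {x : E | 1 ≤ ‖x‖} := measurableSet_le measurable_const measurable_norm
  refine (((memLp_inv_one_add_norm hp).restrict _).const_mul 2).mono' (by fun_prop) ?_
  refine (ae_restrict_iff' hset).2 (ae_of_all _ fun x (hx : 1 ≤ ‖x‖) ↦ ?_)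
  rw [norm_inv, norm_norm, ← div_eq_mul_inv, le_div_iff₀ (by positivity)]
  have : 0 < ‖x‖ := one_pos.trans_le hx
  field_simp
  linarith

end Haar

local notation "ℝ³" => EuclideanSpace ℝ (Fin 3)

lemma norm_Kres (ν : ℂ) (x : ℝ³) : ‖Kres ν x‖ = exp (-(ν.im * ‖x‖)) / (4 * π * ‖x‖) := by
  have hden : (4 * (π : ℂ) * (‖x‖ : ℂ)) = ((4 * π * ‖x‖ : ℝ) : ℂ) := by push_cast; ring
  rw [Kres, norm_div, Complex.norm_exp, hden, Complex.norm_real,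
    Real.norm_of_nonneg (by positivity)]
  simp [Complex.mul_re]

lemma norm_Kres_le_inv_norm {ν : ℂ} (hν : 0 ≤ ν.im) (x : ℝ³) : ‖Kres ν x‖ ≤ ‖x‖⁻¹ := by
  rw [norm_Kres]
  rcases (norm_nonneg x).eq_or_lt with h0 | hx
  · simp [← h0]
  calc exp (-(ν.im * ‖x‖)) / (4 * π * ‖x‖) ≤ 1 / (1 * ‖x‖) := by
        gcongr
        · exact exp_le_one_iff.2 (by nlinarith)
        · linarith [pi_gt_three]
    _ = ‖x‖⁻¹ := by rw [one_mul, one_div]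

lemma norm_Kres_eq_mul_norm_Kres_I {ν : ℂ} (hν : 0 < ν.im) (x : ℝ³) :
    ‖Kres ν x‖ = ν.im * ‖Kres Complex.I (ν.im • x)‖ := by
  rw [norm_Kres, norm_Kres, norm_smul, Real.norm_of_nonneg hν.le, Complex.I_im, one_mul]
  rcases (norm_nonneg x).eq_or_lt with h0 | hx
  · simp [← h0]
  field_simp

lemma measurable_Kres (ν : ℂ) : Measurable (Kres ν) := by
  unfold Kres; fun_prop

lemma memLp_Kres {ν : ℂ} (hν : 0 < ν.im) {p : ℝ≥0∞} (hp : p < 3) : MemLp (Kres ν) p volume := by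
  have hmeas := (measurable_Kres ν).aestronglyMeasurable (μ := volume)
  rcases eq_or_ne p 0 with rfl | hp0
  · exact memLp_zero_iff_aestronglyMeasurable.2 hmeas
  have hptop : p ≠ ∞ := (hp.trans ENNReal.ofNat_lt_top).ne
  set q := p.toReal
  have hq0 : 0 < q := ENNReal.toReal_pos hp0 hptop
  have hq3 : q < 3 := by simpa using (ENNReal.toReal_lt_toReal hptop (by simp)).2 hp
  rw [← integrable_norm_rpow_iff hmeas hp0 hptop]
  simp_rw [norm_Kres]
  refine (integrable_fun_norm_addHaar volume
    (f := fun r ↦ (exp (-(ν.im * r)) / (4 * π * r)) ^ q)).2 ?_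
  rw [finrank_euclideanSpace_fin]
  refine IntegrableOn.congr_fun ((integrableOn_rpow_mul_exp_neg_mul_rpow (s := 2 - q)
    (by linarith) one_pos (mul_pos hq0 hν)).const_mul ((4 * π) ^ (-q))) (fun r (hr : 0 < r) ↦ ?_)
    measurableSet_Ioi
  rw [smul_eq_mul, Real.rpow_one, Real.div_rpow (exp_pos _).le (by positivity), ← Real.exp_mul,
    Real.mul_rpow (by positivity) hr.le, Real.rpow_sub hr, Real.rpow_neg (by positivity)]
  norm_num
  field_simp

lemma eLpNorm_Kres {ν : ℂ} (hν : 0 < ν.im) {p : ℝ≥0∞} (hp : p ≠ ∞) :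
    eLpNorm (Kres ν) p volume =
      ENNReal.ofReal (ν.im ^ (1 - 3 / p.toReal)) * eLpNorm (Kres Complex.I) p volume := by
  have hscale : eLpNorm (Kres ν) p volume =
      eLpNorm (ν.im • fun x : ℝ³ ↦ Kres Complex.I (ν.im • x)) p volume :=
    eLpNorm_congr_norm_ae (ae_of_all _ fun x ↦ by
      rw [Pi.smul_apply, norm_smul, Real.norm_of_nonneg hν.le, norm_Kres_eq_mul_norm_Kres_I hν])
  rw [hscale, eLpNorm_const_smul, eLpNorm_comp_smul (measurable_Kres _).aestronglyMeasurable hν hp,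
    finrank_euclideanSpace_fin, Real.enorm_eq_ofReal hν.le, ← mul_assoc,
    ← ENNReal.ofReal_mul hν.le, sub_eq_add_neg, Real.rpow_add hν, Real.rpow_one]
  norm_num

/-- For `Im ν > 0`: (a) an absolute (ν-independent) bound
`‖K_ν‖_{L²(|x|<1)} ≤ C`; (b) for each `1 ≤ p ≤ ∞`, `p ≠ 3`, a `ν`-independent bound
`‖K_ν‖_{L^p(|x|≥1)} ≤ C_p (1 + (Im ν)^{1−3/p})`. -/
theorem stmt9 :
    (∃ C : ℝ, 0 < C ∧ ∀ ν : ℂ, 0 < ν.im →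
      eLpNorm (Kres ν) 2 (volume.restrict {x : EuclideanSpace ℝ (Fin 3) | ‖x‖ < 1}) ≤
        ENNReal.ofReal C) ∧
    (∀ p : ENNReal, 1 ≤ p → p ≠ 3 → ∃ C : ℝ, 0 < C ∧ ∀ ν : ℂ, 0 < ν.im →
      eLpNorm (Kres ν) p (volume.restrict {x : EuclideanSpace ℝ (Fin 3) | 1 ≤ ‖x‖}) ≤
        ENNReal.ofReal (C * (1 + ν.im ^ (1 - 3 / p.toReal)))) := by
  refine ⟨?_, fun p _ hp3 ↦ ?_⟩
  · obtain ⟨C, hC, hbound⟩ := (memLp_norm_inv_ball (E := ℝ³) (μ := volume) (p := 2)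
      (by simp; norm_num) 1).exists_pos_eLpNorm_le
    refine ⟨C, hC, fun ν hν ↦ ?_⟩
    rw [show {x : ℝ³ | ‖x‖ < 1} = ball 0 1 by ext; simp]
    exact (eLpNorm_mono_real (norm_Kres_le_inv_norm hν.le)).trans hbound
  rcases hp3.lt_or_gt with hlt | hgt
  · obtain ⟨C, hC, hbound⟩ := (memLp_Kres (ν := Complex.I) (by simp) hlt).exists_pos_eLpNorm_le
    refine ⟨C, hC, fun ν hν ↦ ?_⟩
    have ht := rpow_nonneg hν.le (1 - 3 / p.toReal)
    calc eLpNorm (Kres ν) p (volume.restrict _)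
        ≤ eLpNorm (Kres ν) p volume := eLpNorm_mono_measure _ Measure.restrict_le_self
      _ = ENNReal.ofReal (ν.im ^ (1 - 3 / p.toReal)) * eLpNorm (Kres Complex.I) p volume :=
        eLpNorm_Kres hν (hlt.trans ENNReal.ofNat_lt_top).ne
      _ ≤ ENNReal.ofReal (ν.im ^ (1 - 3 / p.toReal)) * ENNReal.ofReal C := by gcongr
      _ ≤ ENNReal.ofReal (C * (1 + ν.im ^ (1 - 3 / p.toReal))) := by
        rw [← ENNReal.ofReal_mul ht]
        exact ENNReal.ofReal_le_ofReal (by nlinarith)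
  · obtain ⟨C, hC, hbound⟩ := (memLp_norm_inv_of_one_le_norm (E := ℝ³) (μ := volume) (p := p)
      (by simpa [finrank_euclideanSpace_fin] using hgt)).exists_pos_eLpNorm_le
    refine ⟨C, hC, fun ν hν ↦ ?_⟩
    calc _ ≤ ENNReal.ofReal C := (eLpNorm_mono_real (norm_Kres_le_inv_norm hν.le)).trans hbound
      _ ≤ _ := ENNReal.ofReal_le_ofReal
        (le_mul_of_one_le_right hC.le (le_add_of_nonneg_right (rpow_nonneg hν.le _)))
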